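/- The function W_D(y) = 2·Σ_{i<j} ln(y_i² - y_j²) - ‖y‖²/2 on the open chamber {y ∈ ℝ^N : y_1 > ... > y_{N-1} > |y_N|} (restricted to y_N ≥ 0) attains its maximum at r if and only if r_N = 0 and 4·Σ_{j≠i} 1/(r_i² - r_j²) = 1 for all i = 1,...,N-1. -/

import Mathlib

/-!
In the variables `s i = y i ^ 2`, `WD` becomes `2 * ∑_{i<j} log (s i - s j) - ∑ s i / 2`, which is
concave on the chamber, with `i`-th partial derivative `2 * ∑_{j ≠ i} 1 / (s i - s j) - 1 / 2`.
Concavity (pairwise, through `log x ≤ x - 1`) bounds `WD y - WD r` by this gradient at `r` paired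
with `y ^ 2 - r ^ 2`. If `r_N = 0` and the equations hold, the gradient vanishes except in the last
coordinate, where it is negative while `y_N ^ 2 - r_N ^ 2 ≥ 0`. Conversely, a maximizer is critical
in every coordinate that can move inside the chamber, and `r_N > 0` is impossible because the last
partial derivative `r_N * (4 * ∑_j 1 / (r_N ^ 2 - r_j ^ 2) - 1)` is then negative.
-/

open Finset

noncomputable def WD (n : ℕ) (y : Fin (n + 1) → ℝ) : ℝ :=
  2 * ∑ i, ∑ j ∈ Finset.univ.filter (fun j => i < j), Real.log (y i ^ 2 - y j ^ 2)
    - (∑ i, (y i) ^ 2) / 2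

/-- The open chamber `y₁ > … > y_{N-1} > |y_N|` restricted to `y_N ≥ 0`. -/
def InChamberD (n : ℕ) (y : Fin (n + 1) → ℝ) : Prop :=
  (∀ i j : Fin (n + 1), i < j → j ≠ Fin.last n → y j < y i) ∧
    (∀ i : Fin (n + 1), i ≠ Fin.last n → |y (Fin.last n)| < y i) ∧
    0 ≤ y (Fin.last n)

open Filter Topology

section LogGas

variable {ι : Type*} [Fintype ι] [LinearOrder ι]

theorem sum_sum_lt_add_swap {M : Type*} [AddCommMonoid M] (g : ι → ι → M) :
    ∑ i, ∑ j ∈ univ.filter (fun j => i < j), (g i j + g j i)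
      = ∑ i, ∑ j ∈ univ.erase i, g i j := by
  have hswap : ∑ i, ∑ j ∈ univ.filter (fun j => i < j), g j i
      = ∑ i, ∑ j ∈ univ.filter (fun j => j < i), g i j :=
    sum_comm' (by intro x y; simp)
  simp only [sum_add_distrib]
  rw [hswap, ← sum_add_distrib]
  refine sum_congr rfl fun i _ => ?_
  rw [← sum_filter_add_sum_filter_not (univ.erase i) (fun j => i < j)]
  congr 2 <;> ext j <;> simp only [mem_filter, mem_erase, mem_univ, and_true, true_and, not_lt] <;>
    grind

theorem sum_sum_lt_sub_mul_of_antisymm {R : Type*} [CommRing R] (d : ι → R) (c : ι → ι → R)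
    (hc : ∀ i j, c j i = -c i j) :
    ∑ i, ∑ j ∈ univ.filter (fun j => i < j), (d i - d j) * c i j
      = ∑ i, d i * ∑ j ∈ univ.erase i, c i j := by
  simp only [mul_sum, ← sum_sum_lt_add_swap (fun i j => d i * c i j)]
  refine sum_congr rfl fun i _ => sum_congr rfl fun j _ => ?_
  rw [hc i j]
  ring

noncomputable def logGasEnergy (s : ι → ℝ) : ℝ :=
  2 * ∑ i, ∑ j ∈ univ.filter (fun j => i < j), Real.log (s i - s j) - (∑ i, s i) / 2

noncomputable def logGasForce (s : ι → ℝ) (i : ι) : ℝ :=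
  ∑ j ∈ univ.erase i, 1 / (s i - s j)

theorem logGasForce_nonpos {s : ι → ℝ} {i : ι} (hs : ∀ j ≠ i, s i < s j) :
    logGasForce s i ≤ 0 :=
  sum_nonpos fun j hj => one_div_nonpos.2 (sub_nonpos.2 (hs j (mem_erase.1 hj).1).le)

theorem logGasEnergy_sub_le {s t : ι → ℝ} (hs : StrictAnti s) (ht : StrictAnti t) :
    logGasEnergy t - logGasEnergy s ≤ ∑ i, (t i - s i) * (2 * logGasForce s i - 1 / 2) := by
  have hpair : ∀ i j, i < j → Real.log (t i - t j) - Real.log (s i - s j)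
      ≤ ((t i - s i) - (t j - s j)) * (1 / (s i - s j)) := by
    intro i j hij
    have hS := sub_pos.2 (hs hij)
    have hT := sub_pos.2 (ht hij)
    calc Real.log (t i - t j) - Real.log (s i - s j)
        = Real.log ((t i - t j) / (s i - s j)) := (Real.log_div hT.ne' hS.ne').symm
      _ ≤ (t i - t j) / (s i - s j) - 1 := Real.log_le_sub_one_of_pos (div_pos hT hS)
      _ = _ := by field_simp; ring
  calc logGasEnergy t - logGasEnergy s
      = 2 * ∑ i, ∑ j ∈ univ.filter (fun j => i < j),
          (Real.log (t i - t j) - Real.log (s i - s j)) - (∑ i, (t i - s i)) / 2 := by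
        simp only [logGasEnergy, sum_sub_distrib]; ring
    _ ≤ 2 * ∑ i, ∑ j ∈ univ.filter (fun j => i < j),
          ((t i - s i) - (t j - s j)) * (1 / (s i - s j)) - (∑ i, (t i - s i)) / 2 := by
        gcongr with i _ j hj
        exact hpair i j (mem_filter.1 hj).2
    _ = _ := by
        rw [sum_sum_lt_sub_mul_of_antisymm _ _ fun i j => by rw [← neg_sub, div_neg],
          mul_sum, sum_div, ← sum_sub_distrib]
        exact sum_congr rfl fun i _ => by unfold logGasForce; ring

theorem hasDerivAt_logGasEnergy_update {s : ι → ℝ} (hs : Function.Injective s) (i : ι) :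
    HasDerivAt (fun x => logGasEnergy (Function.update s i x))
      (2 * logGasForce s i - 1 / 2) (s i) := by
  have hu : ∀ k, HasDerivAt (fun x => Function.update s i x k) ((Pi.single i 1 : ι → ℝ) k) (s i) :=
    hasDerivAt_pi.1 (hasDerivAt_update s i (s i))
  have hlog : ∀ j k, j < k →
      HasDerivAt (fun x => Real.log (Function.update s i x j - Function.update s i x k))
        (((Pi.single i 1 : ι → ℝ) j - (Pi.single i 1 : ι → ℝ) k) * (1 / (s j - s k))) (s i) := by
    intro j k hjk
    have := ((hu j).fun_sub (hu k)).log (by simpa using sub_ne_zero.2 (hs.ne hjk.ne))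
    rwa [Function.update_eq_self, div_eq_mul_one_div] at this
  have hE := ((HasDerivAt.fun_sum (u := univ) fun j _ =>
    HasDerivAt.fun_sum (u := univ.filter (fun k => j < k)) fun k hk =>
      hlog j k (mem_filter.1 hk).2).const_mul 2).fun_sub
    ((HasDerivAt.fun_sum (u := univ) fun k _ => hu k).div_const 2)
  refine hE.congr_deriv ?_
  rw [sum_sum_lt_sub_mul_of_antisymm _ _ fun i j => by rw [← neg_sub, div_neg]]
  simp [Pi.single_apply, logGasForce]

end LogGas

theorem WD_eq_logGasEnergy (n : ℕ) (y : Fin (n + 1) → ℝ) :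
    WD n y = logGasEnergy (fun i => y i ^ 2) := rfl

namespace InChamberD

variable {n : ℕ} {y : Fin (n + 1) → ℝ}

theorem pos (hy : InChamberD n y) {i : Fin (n + 1)} (hi : i ≠ Fin.last n) : 0 < y i :=
  (abs_nonneg _).trans_lt (hy.2.1 i hi)

theorem strictAnti_sq (hy : InChamberD n y) : StrictAnti fun i => y i ^ 2 := by
  intro i j hij
  have hi : i ≠ Fin.last n := (hij.trans_le (Fin.le_last j)).ne
  rcases eq_or_ne j (Fin.last n) with rfl | hj
  · simpa only [sq_abs] using pow_lt_pow_left₀ (hy.2.1 i hi) (abs_nonneg _) two_ne_zero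
  · exact pow_lt_pow_left₀ (hy.1 i j hij hj) (hy.pos hj).le two_ne_zero

theorem eventually_update (hy : InChamberD n y) {i : Fin (n + 1)}
    (hi : i ≠ Fin.last n ∨ 0 < y (Fin.last n)) :
    ∀ᶠ t in 𝓝 (y i), InChamberD n (Function.update y i t) := by
  have hupdate : Tendsto (Function.update y i) (𝓝 (y i)) (𝓝 y) := by
    have : Continuous (Function.update y i) := continuous_const.update i continuous_id
    simpa using this.tendsto (y i)
  have hstrict : ∀ᶠ z in 𝓝 y, (∀ j k : Fin (n + 1), j < k → k ≠ Fin.last n → z k < z j) ∧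
      ∀ j : Fin (n + 1), j ≠ Fin.last n → |z (Fin.last n)| < z j := by
    refine (eventually_all.2 fun j => eventually_all.2 fun k => ?_).and
      (eventually_all.2 fun j => ?_)
    · simp only [eventually_imp_distrib_left]
      exact fun hjk hk => (continuous_apply k).continuousAt.eventually_lt
        (continuous_apply j).continuousAt (hy.1 j k hjk hk)
    · rw [eventually_imp_distrib_left]
      exact fun hj => (continuous_apply _).abs.continuousAt.eventually_lt
        (continuous_apply j).continuousAt (hy.2.1 j hj)
  have hlast : ∀ᶠ t in 𝓝 (y i), 0 ≤ Function.update y i t (Fin.last n) := by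
    by_cases h : i = Fin.last n
    · subst h
      filter_upwards [lt_mem_nhds (hi.resolve_left (not_not_intro rfl))] with t ht
      simpa using ht.le
    · exact Eventually.of_forall fun t => by simpa [Function.update_of_ne (Ne.symm h)] using hy.2.2
  filter_upwards [hupdate.eventually hstrict, hlast] with t ht ht'
  exact ⟨ht.1, ht.2, ht'⟩

theorem mul_logGasForce_eq_zero_of_isMax (hy : InChamberD n y)
    (hmax : ∀ z, InChamberD n z → WD n z ≤ WD n y) {i : Fin (n + 1)}
    (hi : i ≠ Fin.last n ∨ 0 < y (Fin.last n)) :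
    y i * (4 * logGasForce (fun k => y k ^ 2) i - 1) = 0 := by
  have hloc : IsLocalMax (fun t => WD n (Function.update y i t)) (y i) := by
    filter_upwards [hy.eventually_update hi] with t ht
    simpa using hmax _ ht
  have hderiv : HasDerivAt (fun t => WD n (Function.update y i t))
      ((2 * logGasForce (fun k => y k ^ 2) i - 1 / 2) * (2 * y i)) (y i) := by
    have hsq : HasDerivAt (fun t : ℝ => t ^ 2) (2 * y i) (y i) := by
      simpa using hasDerivAt_pow 2 (y i)
    have := (hasDerivAt_logGasEnergy_update hy.strictAnti_sq.injective i).comp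
      (h := fun t : ℝ => t ^ 2) (y i) hsq
    refine this.congr_of_eventuallyEq (Eventually.of_forall fun t => ?_)
    simp only [WD_eq_logGasEnergy, Function.comp_apply]
    exact congrArg logGasEnergy (Function.comp_update (· ^ 2) y i t)
  linear_combination hloc.hasDerivAt_eq_zero hderiv

end InChamberD

theorem stmt_13 (n : ℕ) (r : Fin (n + 1) → ℝ) (hr : InChamberD n r) :
    (∀ y : Fin (n + 1) → ℝ, InChamberD n y → WD n y ≤ WD n r) ↔
      (r (Fin.last n) = 0 ∧
        ∀ i : Fin (n + 1), i ≠ Fin.last n →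
          4 * ∑ j ∈ Finset.univ.erase i, 1 / (r i ^ 2 - r j ^ 2) = 1) := by
  have hforce_last : logGasForce (fun k => r k ^ 2) (Fin.last n) ≤ 0 :=
    logGasForce_nonpos fun j hj => hr.strictAnti_sq (Fin.lt_last_iff_ne_last.2 hj)
  constructor
  · intro hmax
    have hlast : r (Fin.last n) = 0 := by
      by_contra h
      have hpos : 0 < r (Fin.last n) := hr.2.2.lt_of_ne' h
      have hcrit_last := hr.mul_logGasForce_eq_zero_of_isMax hmax (i := Fin.last n) (.inr hpos)
      nlinarith
    refine ⟨hlast, fun i hi => ?_⟩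
    have hcrit_i := hr.mul_logGasForce_eq_zero_of_isMax hmax (.inl hi)
    exact sub_eq_zero.1 ((mul_eq_zero.1 hcrit_i).resolve_left (hr.pos hi).ne')
  · rintro ⟨hlast, hcrit⟩ y hy
    rw [← sub_nonpos, WD_eq_logGasEnergy, WD_eq_logGasEnergy]
    refine (logGasEnergy_sub_le hr.strictAnti_sq hy.strictAnti_sq).trans
      (sum_nonpos fun i _ => ?_)
    by_cases hi : i = Fin.last n
    · subst hi
      refine mul_nonpos_of_nonneg_of_nonpos ?_ (by linarith)
      simp [hlast, sq_nonneg]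
    · have hcrit_i : 4 * logGasForce (fun k => r k ^ 2) i = 1 := hcrit i hi
      rw [show 2 * logGasForce (fun k => r k ^ 2) i - 1 / 2 = 0 by linarith, mul_zero]
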